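/- arXiv:1905.07525 — 3 statements merged into one kernel-verified Lean document; each statement's English description precedes it below -/
import Mathlib

section
/- Let α, β > 0 and f(ζ) = 2/(α + √(α² + 4βζ)). Then for any vector v in ℝⁿ, the equation α·w + β·‖w‖·w = v has the unique solution w = f(‖v‖)·v. -/
/-!
The Forchheimer map is `w ↦ (α + β‖w‖) • w`, so any solution `w` is a positive multiple of `v`,
and its norm `t = ‖w‖` solves `β t² + α t = ‖v‖`. The coefficient `2 / (α + √(α² + 4βζ))` is the
positive root `c` of `β ζ c² + α c = 1` (the reciprocal form of the quadratic formula), which gives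
both existence and uniqueness.
-/

open Real

noncomputable def forchheimerCoeff (α β ζ : ℝ) : ℝ :=
  2 / (α + √(α ^ 2 + 4 * β * ζ))

section Scalar

variable {α β : ℝ}

lemma forchheimerCoeff_pos (hα : 0 < α) (ζ : ℝ) : 0 < forchheimerCoeff α β ζ := by
  unfold forchheimerCoeff
  positivity

lemma forchheimerCoeff_quadratic_eq (hα : 0 < α) {ζ : ℝ} (hζ : 0 ≤ α ^ 2 + 4 * β * ζ) :
    (α + β * (forchheimerCoeff α β ζ * ζ)) * forchheimerCoeff α β ζ = 1 := by
  unfold forchheimerCoeff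
  set s := √(α ^ 2 + 4 * β * ζ)
  have hs : s ^ 2 = α ^ 2 + 4 * β * ζ := sq_sqrt hζ
  have hden : 0 < α + s := by positivity
  field_simp
  nlinarith

lemma forchheimerCoeff_mul_eq_one (hα : 0 < α) (hβ : 0 ≤ β) {t : ℝ} (ht : 0 ≤ t) :
    forchheimerCoeff α β ((α + β * t) * t) * (α + β * t) = 1 := by
  have hsqrt : √(α ^ 2 + 4 * β * ((α + β * t) * t)) = α + 2 * β * t := by
    rw [show α ^ 2 + 4 * β * ((α + β * t) * t) = (α + 2 * β * t) ^ 2 by ring]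
    exact sqrt_sq (by positivity)
  have hden : 0 < α + β * t := by positivity
  rw [forchheimerCoeff, hsqrt]
  field_simp
  ring

end Scalar

section Forchheimer

variable {E : Type*} [NormedAddCommGroup E] [NormedSpace ℝ E] {α β : ℝ}

lemma forchheimerCoeff_smul_solves (hα : 0 < α) (hβ : 0 ≤ β) (v : E) :
    α • (forchheimerCoeff α β ‖v‖ • v) +
      (β * ‖forchheimerCoeff α β ‖v‖ • v‖) • (forchheimerCoeff α β ‖v‖ • v) = v := by
  have hc := forchheimerCoeff_quadratic_eq (β := β) (ζ := ‖v‖) hα (by positivity)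
  rw [norm_smul, norm_of_nonneg (forchheimerCoeff_pos hα _).le, smul_smul, smul_smul, ← add_smul,
    ← add_mul, hc, one_smul]

lemma eq_forchheimerCoeff_smul_of_solves (hα : 0 < α) (hβ : 0 ≤ β) {v w : E}
    (hw : α • w + (β * ‖w‖) • w = v) : w = forchheimerCoeff α β ‖v‖ • v := by
  have hv : v = (α + β * ‖w‖) • w := by rw [← hw, add_smul]
  have hnorm : ‖v‖ = (α + β * ‖w‖) * ‖w‖ := by
    rw [hv, norm_smul, norm_of_nonneg (by positivity)]
  rw [hnorm, hv, smul_smul, forchheimerCoeff_mul_eq_one hα hβ (norm_nonneg w), one_smul]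

end Forchheimer

theorem stmt3 (n : ℕ) (α β : ℝ) (hα : 0 < α) (hβ : 0 < β)
    (f : ℝ → ℝ) (hf : f = fun ζ => 2 / (α + Real.sqrt (α ^ 2 + 4 * β * ζ)))
    (v : EuclideanSpace ℝ (Fin n)) :
    (α • (f ‖v‖ • v) + (β * ‖f ‖v‖ • v‖) • (f ‖v‖ • v) = v) ∧
    (∀ w : EuclideanSpace ℝ (Fin n),
      α • w + (β * ‖w‖) • w = v → w = f ‖v‖ • v) := by
  have hf' : f = forchheimerCoeff α β := hf
  subst hf'
  exact ⟨forchheimerCoeff_smul_solves hα hβ.le v,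
    fun _ hw => eq_forchheimerCoeff_smul_of_solves hα hβ.le hw⟩
end

section
/- Let α, β > 0 and f(ζ) = 2/(α + √(α² + 4βζ)). For any two vectors η₁, η₂ ∈ ℝⁿ, (f(‖η₁‖)η₁ − f(‖η₂‖)η₂) · (η₁ − η₂) ≥ (1/2)·f(max(‖η₁‖, ‖η₂‖))·‖η₁ − η₂‖². -/
/-!
Writing `a = ‖η₁‖ ≥ b = ‖η₂‖` and `t = ⟪η₁, η₂⟫ ≤ a b`, the difference of the two sides is
`f(b) (a b - t) + (a - b) (f(a) (a + b) - 2 f(b) b) / 2`,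
so for any nonnegative `f` it suffices that `2 f(b) b ≤ f(a) (a + b)` whenever `0 ≤ b ≤ a`.
For the Darcy–Forchheimer nonlinearity this reduces, after squaring, to
`4 b² (α² + 4 β a) ≤ (a + b)² (α² + 4 β b)`, which follows from `(a + b)² ≥ 4 a b` and `b (a - b)² ≥ 0`.
-/

open scoped RealInnerProductSpace

section StrongMonotonicity

variable {E : Type*} [NormedAddCommGroup E] [InnerProductSpace ℝ E]

theorem half_mul_max_mul_norm_sub_sq_le_inner_smul_norm_sub {f : ℝ → ℝ}
    (hf_nonneg : ∀ ζ, 0 ≤ ζ → 0 ≤ f ζ)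
    (hf_growth : ∀ a b, 0 ≤ b → b ≤ a → 2 * f b * b ≤ f a * (a + b)) (x y : E) :
    1 / 2 * f (max ‖x‖ ‖y‖) * ‖x - y‖ ^ 2 ≤ ⟪f ‖x‖ • x - f ‖y‖ • y, x - y⟫ := by
  wlog hyx : ‖y‖ ≤ ‖x‖ generalizing x y
  · have h := this y x (le_of_not_ge hyx)
    rwa [max_comm, norm_sub_rev, ← neg_sub (f ‖x‖ • x), ← neg_sub x, inner_neg_neg] at h
  have expand : ⟪f ‖x‖ • x - f ‖y‖ • y, x - y⟫
      = f ‖x‖ * ‖x‖ ^ 2 + f ‖y‖ * ‖y‖ ^ 2 - (f ‖x‖ + f ‖y‖) * ⟪x, y⟫ := by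
    simp only [inner_sub_left, inner_sub_right, real_inner_smul_left,
      real_inner_self_eq_norm_sq, real_inner_comm x y]
    ring
  rw [expand, max_eq_left hyx, norm_sub_sq_real]
  have hcs := real_inner_le_norm x y
  have hfy := hf_nonneg ‖y‖ (norm_nonneg y)
  have hgrowth := hf_growth ‖x‖ ‖y‖ (norm_nonneg y) hyx
  nlinarith [mul_nonneg hfy (sub_nonneg.2 hcs),
    mul_nonneg (sub_nonneg.2 hyx) (sub_nonneg.2 hgrowth)]

end StrongMonotonicity

noncomputable def darcyForchheimer (α β ζ : ℝ) : ℝ :=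
  2 / (α + Real.sqrt (α ^ 2 + 4 * β * ζ))

section DarcyForchheimer

variable {α β : ℝ}

theorem darcyForchheimer_pos (hα : 0 < α) (ζ : ℝ) : 0 < darcyForchheimer α β ζ := by
  unfold darcyForchheimer
  positivity

theorem two_mul_mul_sqrt_le_add_mul_sqrt (hβ : 0 ≤ β) {a b : ℝ} (hb : 0 ≤ b) (hba : b ≤ a) :
    2 * b * Real.sqrt (α ^ 2 + 4 * β * a) ≤ (a + b) * Real.sqrt (α ^ 2 + 4 * β * b) := by
  have ha : 0 ≤ a := hb.trans hba
  rw [← pow_le_pow_iff_left₀ (by positivity) (by positivity) two_ne_zero]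
  simp only [mul_pow, Real.sq_sqrt (by positivity : 0 ≤ α ^ 2 + 4 * β * a),
    Real.sq_sqrt (by positivity : 0 ≤ α ^ 2 + 4 * β * b)]
  nlinarith [mul_nonneg (mul_nonneg (sub_nonneg.2 hba) (by linarith : 0 ≤ a + 3 * b)) (sq_nonneg α),
    mul_nonneg (mul_nonneg hβ hb) (sq_nonneg (a - b))]

theorem two_mul_darcyForchheimer_mul_le (hα : 0 < α) (hβ : 0 ≤ β) {a b : ℝ}
    (hb : 0 ≤ b) (hba : b ≤ a) :
    2 * darcyForchheimer α β b * b ≤ darcyForchheimer α β a * (a + b) := by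
  unfold darcyForchheimer
  have hsqrt := two_mul_mul_sqrt_le_add_mul_sqrt (α := α) hβ hb hba
  rw [mul_comm 2, mul_assoc, div_mul_eq_mul_div, div_mul_eq_mul_div,
    div_le_div_iff₀ (by positivity) (by positivity)]
  nlinarith [mul_nonneg (sub_nonneg.2 hba) hα.le]

end DarcyForchheimer

theorem stmt7 (n : ℕ) (α β : ℝ) (hα : 0 < α) (hβ : 0 < β)
    (f : ℝ → ℝ) (hf : f = fun ζ => 2 / (α + Real.sqrt (α ^ 2 + 4 * β * ζ)))
    (η₁ η₂ : EuclideanSpace ℝ (Fin n)) :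
    ⟪f ‖η₁‖ • η₁ - f ‖η₂‖ • η₂, η₁ - η₂⟫
      ≥ (1 / 2) * f (max ‖η₁‖ ‖η₂‖) * ‖η₁ - η₂‖ ^ 2 := by
  subst hf
  exact half_mul_max_mul_norm_sub_sq_le_inner_smul_norm_sub (f := darcyForchheimer α β)
    (fun ζ _ => (darcyForchheimer_pos hα ζ).le)
    (fun _ _ hb hba => two_mul_darcyForchheimer_mul_le hα hβ.le hb hba) η₁ η₂
end

section
/- Let h > 0, and let W : [−h, h] → ℝ be continuously differentiable. Then ∫_{−h}^{h} |(W(h) − W(λ))/(2h)|^{3/2} dλ ≤ (2/3)·∫_{−h}^{h} |W'(λ)|^{3/2} dλ. -/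
open MeasureTheory Set intervalIntegral

set_option maxHeartbeats 1600000

theorem stmt14 (h : ℝ) (hh : 0 < h) (W : ℝ → ℝ)
    (hW : ContDiffOn ℝ 1 W (Set.Icc (-h) h)) :
    ∫ l in (-h)..h, |(W h - W l) / (2 * h)| ^ ((3 : ℝ) / 2)
      ≤ (2 / 3) * ∫ l in (-h)..h, |deriv W l| ^ ((3 : ℝ) / 2) := by
  have hlh : -h ≤ h := by linarith
  set g := derivWithin W (Set.Icc (-h) h) with hgdef
  have hud : UniqueDiffOn ℝ (Set.Icc (-h) h) := uniqueDiffOn_Icc (by linarith)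
  have hgc : ContinuousOn g (Set.Icc (-h) h) :=
    hW.continuousOn_derivWithin hud le_rfl
  have hWc : ContinuousOn W (Set.Icc (-h) h) := hW.continuousOn
  have hderiv : ∀ x ∈ Set.Ioo (-h) h, HasDerivAt W (g x) x := by
    intro x hx
    have hx' : Set.Icc (-h) h ∈ nhds x := Icc_mem_nhds hx.1 hx.2
    have hd : DifferentiableAt ℝ W x :=
      ((hW.differentiableOn one_ne_zero) x (Set.mem_Icc_of_Ioo hx)).differentiableAt hx'
    have hgx : g x = deriv W x := derivWithin_of_mem_nhds hx'
    rw [hgx]; exact hd.hasDerivAt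
  -- B : the integral of |g|^{3/2}
  set B : ℝ := ∫ t in Set.Ioc (-h) h, |g t| ^ ((3 : ℝ) / 2) with hBdef
  have hBint : IntegrableOn (fun t => |g t| ^ ((3 : ℝ) / 2)) (Set.Icc (-h) h) := by
    apply ContinuousOn.integrableOn_compact isCompact_Icc
    exact hgc.abs.rpow_const (fun x _ => Or.inr (by norm_num))
  have hB0 : 0 ≤ B := by
    apply setIntegral_nonneg measurableSet_Ioc
    intro x _
    positivity
  -- key pointwise bound
  have key : ∀ l ∈ Set.Icc (-h) h,
      |W h - W l| ^ ((3 : ℝ) / 2) ≤ (h - l) ^ ((1 : ℝ) / 2) * B := by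
    intro l hl
    have hlb : -h ≤ l := hl.1
    have hub : l ≤ h := hl.2
    have hsub : Set.Icc l h ⊆ Set.Icc (-h) h := Set.Icc_subset_Icc hlb le_rfl
    have hgint : IntervalIntegrable g volume l h := by
      apply ContinuousOn.intervalIntegrable
      rw [Set.uIcc_of_le hub]; exact hgc.mono hsub
    -- FTC
    have hftc : ∫ t in l..h, g t = W h - W l := by
      apply integral_eq_sub_of_hasDerivAt_of_le hub (hWc.mono hsub)
      · intro x hx
        exact hderiv x ⟨lt_of_le_of_lt hlb hx.1, hx.2⟩
      · exact hgint
    -- Hölder on Ioc l h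
    have hfin : IsFiniteMeasure (volume.restrict (Set.Ioc l h)) := by
      constructor
      rw [Measure.restrict_apply_univ, Real.volume_Ioc]
      exact ENNReal.ofReal_lt_top
    have hconj : Real.HolderConjugate ((3 : ℝ) / 2) 3 := Real.holderConjugate_iff.mpr ⟨by norm_num, by norm_num⟩
    have hmeas : AEStronglyMeasurable (fun t => |g t|) (volume.restrict (Set.Ioc l h)) := by
      apply ContinuousOn.aestronglyMeasurable _ measurableSet_Ioc
      exact (hgc.mono (Set.Ioc_subset_Icc_self.trans hsub)).abs
    obtain ⟨C, hC⟩ := isCompact_Icc.exists_bound_of_continuousOn hgc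
    have hfmem : MemLp (fun t => |g t|) (ENNReal.ofReal ((3 : ℝ) / 2))
        (volume.restrict (Set.Ioc l h)) := by
      apply MemLp.of_bound hmeas C
      rw [ae_restrict_iff' measurableSet_Ioc]
      filter_upwards with x hx
      simpa using hC x (Set.Ioc_subset_Icc_self.trans hsub hx)
    have hgmem : MemLp (fun _ : ℝ => (1 : ℝ)) (ENNReal.ofReal (3 : ℝ))
        (volume.restrict (Set.Ioc l h)) := memLp_const 1
    have hold := integral_mul_le_Lp_mul_Lq_of_nonneg hconj
      (Filter.Eventually.of_forall fun x => abs_nonneg (g x))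
      (Filter.Eventually.of_forall fun _ => zero_le_one) hfmem hgmem
    simp only [mul_one] at hold
    have h1 : ∫ a in Set.Ioc l h, (1 : ℝ) ^ (3 : ℝ) = h - l := by
      simp [Real.volume_Ioc, ENNReal.toReal_ofReal (by linarith : (0:ℝ) ≤ h - l), hub]
    rw [h1] at hold
    have hmono : (∫ a in Set.Ioc l h, |g a| ^ ((3 : ℝ) / 2)) ≤ B := by
      apply setIntegral_mono_set (hBint.mono_set Set.Ioc_subset_Icc_self)
      · filter_upwards with x; positivity
      · exact HasSubset.Subset.eventuallyLE (Set.Ioc_subset_Ioc hlb le_rfl)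
    have hIabs : |W h - W l| ≤ (∫ a in Set.Ioc l h, |g a|) := by
      rw [← hftc]
      calc |∫ t in l..h, g t| ≤ ∫ t in l..h, |g t| :=
              intervalIntegral.abs_integral_le_integral_abs hub
        _ = ∫ a in Set.Ioc l h, |g a| := intervalIntegral.integral_of_le hub
    have hIocnn : 0 ≤ ∫ a in Set.Ioc l h, |g a| ^ ((3 : ℝ) / 2) := by
      apply setIntegral_nonneg measurableSet_Ioc; intro x _; positivity
    have hstep : |W h - W l| ≤ B ^ ((2 : ℝ) / 3) * (h - l) ^ ((1 : ℝ) / 3) := by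
      refine hIabs.trans (hold.trans ?_)
      have h23 : ((1:ℝ) / ((3:ℝ)/2)) = (2:ℝ)/3 := by norm_num
      rw [h23]
      exact mul_le_mul_of_nonneg_right
        (Real.rpow_le_rpow hIocnn hmono (by norm_num))
        (Real.rpow_nonneg (by linarith) _)
    calc |W h - W l| ^ ((3 : ℝ) / 2)
        ≤ (B ^ ((2 : ℝ) / 3) * (h - l) ^ ((1 : ℝ) / 3)) ^ ((3 : ℝ) / 2) := by
          apply Real.rpow_le_rpow (abs_nonneg _) hstep (by norm_num)
      _ = (h - l) ^ ((1 : ℝ) / 2) * B := by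
          rw [Real.mul_rpow (Real.rpow_nonneg hB0 _) (Real.rpow_nonneg (by linarith) _),
            ← Real.rpow_mul hB0, ← Real.rpow_mul (by linarith : (0:ℝ) ≤ h - l)]
          norm_num [mul_comm]
  -- integrate the pointwise bound
  have hWint : IntervalIntegrable (fun l => |W h - W l| ^ ((3 : ℝ) / 2)) volume (-h) h := by
    apply ContinuousOn.intervalIntegrable
    rw [Set.uIcc_of_le hlh]
    exact ((continuousOn_const.sub hWc).abs).rpow_const (fun x _ => Or.inr (by norm_num))
  have hrint : IntervalIntegrable (fun l => (h - l) ^ ((1 : ℝ) / 2) * B) volume (-h) h := by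
    apply ContinuousOn.intervalIntegrable
    apply ContinuousOn.mul _ continuousOn_const
    exact (continuousOn_const.sub continuousOn_id).rpow_const (fun x _ => Or.inr (by norm_num))
  have hint1 : (∫ l in (-h)..h, |W h - W l| ^ ((3 : ℝ) / 2))
      ≤ ∫ l in (-h)..h, (h - l) ^ ((1 : ℝ) / 2) * B := by
    apply intervalIntegral.integral_mono_on hlh hWint hrint key
  have hint2 : (∫ l in (-h)..h, (h - l) ^ ((1 : ℝ) / 2) * B)
      = (2 / 3) * (2 * h) ^ ((3 : ℝ) / 2) * B := by
    rw [intervalIntegral.integral_mul_const]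
    have hF : ∀ x : ℝ, HasDerivAt (fun l : ℝ => -(2/3) * (h - l) ^ ((3:ℝ)/2))
        ((h - x) ^ ((1:ℝ)/2)) x := by
      intro x
      have h1 : HasDerivAt (fun l : ℝ => h - l) (-1) x := (hasDerivAt_id x).const_sub h
      have h2 := (Real.hasDerivAt_rpow_const (p := (3:ℝ)/2) (x := h - x)
        (Or.inr (by norm_num))).comp x h1
      have h3 := h2.const_mul (-(2/3) : ℝ)
      refine h3.congr_deriv ?_
      rw [show (3:ℝ)/2 - 1 = 1/2 by norm_num]
      ring
    have hint' : IntervalIntegrable (fun l : ℝ => (h - l) ^ ((1:ℝ)/2)) volume (-h) h := by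
      apply ContinuousOn.intervalIntegrable
      exact (continuousOn_const.sub continuousOn_id).rpow_const (fun x _ => Or.inr (by norm_num))
    have hval := intervalIntegral.integral_eq_sub_of_hasDerivAt
      (f := fun l : ℝ => -(2/3) * (h - l) ^ ((3:ℝ)/2)) (fun x _ => hF x) hint'
    rw [hval]
    simp only [show h - h = (0:ℝ) by ring, show h - -h = 2*h by ring,
      Real.zero_rpow (by norm_num : ((3:ℝ)/2) ≠ 0)]
    ring
  -- translate LHS
  have hLHS : (∫ l in (-h)..h, |(W h - W l) / (2 * h)| ^ ((3 : ℝ) / 2))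
      = (∫ l in (-h)..h, |W h - W l| ^ ((3 : ℝ) / 2)) / (2 * h) ^ ((3 : ℝ) / 2) := by
    rw [← intervalIntegral.integral_div]
    apply intervalIntegral.integral_congr
    intro x _
    show |(W h - W x) / (2 * h)| ^ ((3:ℝ)/2)
      = |W h - W x| ^ ((3:ℝ)/2) / (2 * h) ^ ((3:ℝ)/2)
    rw [abs_div, Real.div_rpow (abs_nonneg _) (abs_nonneg _),
      abs_of_pos (by linarith : (0:ℝ) < 2 * h)]
  -- translate RHS
  have hRHS : (∫ l in (-h)..h, |deriv W l| ^ ((3 : ℝ) / 2)) = B := by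
    rw [hBdef, ← intervalIntegral.integral_of_le hlh]
    apply intervalIntegral.integral_congr_ae
    have hae : ∀ᵐ x : ℝ, x ≠ h := by
      have : (volume ({h} : Set ℝ)) = 0 := measure_singleton h
      rw [ae_iff]; simpa using this
    filter_upwards [hae] with x hx hmem
    rw [Set.uIoc_of_le hlh] at hmem
    have hxo : x ∈ Set.Ioo (-h) h := ⟨hmem.1, lt_of_le_of_ne hmem.2 hx⟩
    have hx' : Set.Icc (-h) h ∈ nhds x := Icc_mem_nhds hxo.1 hxo.2
    rw [← derivWithin_of_mem_nhds hx']
  rw [hLHS, hRHS]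
  rw [div_le_iff₀ (by positivity)]
  calc (∫ l in (-h)..h, |W h - W l| ^ ((3 : ℝ) / 2))
      ≤ (2 / 3) * (2 * h) ^ ((3 : ℝ) / 2) * B := hint1.trans (le_of_eq hint2)
    _ = 2 / 3 * B * (2 * h) ^ ((3 : ℝ) / 2) := by ring
end
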